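/- arXiv:1312.1185 — 2 statements merged into one kernel-verified Lean document; each statement's English description precedes it below -/
import Mathlib

section
/- Let $(x_1,\ldots,x_n)$ and $(y_1,\ldots,y_n)$ be two tuples of real numbers. Assign to every permutation $\sigma$ of $\{1,\ldots,n\}$ the weight $\epsilon_\sigma = 0$ if $x_{\sigma(1)} + x_{\sigma(2)} + \cdots + x_{\sigma(k)} < y_k$ for some $k \in \{1,\ldots,n\}$, and $\epsilon_\sigma = \mathrm{sign}(\sigma)$ otherwise. Then $\sum_{\sigma \in S_n} \epsilon_\sigma \leq \sqrt{n}^{\,n}$. -/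
/-!
Identify `R`-valued functions on `Finset α` with elements of the exterior algebra over `α`,
`g ↦ ∑ g s • e_s`. Right multiplication by `e_a` and contraction by `e_a` satisfy the
canonical anticommutation relations, so `D = ∧ (∑ₐ e_a)` obeys `D* D + D D* = |α|` and hence
`‖D g‖ ≤ √|α| ‖g‖`. Starting from `1 = e_∅` and alternating `D` with the diagonal
projection `P_k` that kills every `e_s` violating the `k`-th prefix condition, after `n` steps
the coefficient of `e_univ` is `∑ σ, ε σ`: each permutation contributes the chain of its
prefix sets, with the sign accumulated by the `insertSign` factors. Projections do not
increase the norm, so this coefficient is at most `√n ^ n`.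
-/

open Finset
open scoped symmDiff

theorem Finset.sum_comp_symmDiff {β M : Type*} [Fintype β] [DecidableEq β] [AddCommMonoid M]
    (t : Finset β) (f : Finset β → M) : ∑ s, f (s ∆ t) = ∑ s, f s :=
  Fintype.sum_bijective _ (symmDiff_left_involutive t).bijective _ _ fun _ => rfl

namespace Fin

variable {β : Type*} [DecidableEq β] {k : ℕ}

theorem image_Iic_castSucc_snoc (f : Fin k → β) (a : β) (j : Fin k) :
    (Iic j.castSucc).image (snoc f a : Fin (k + 1) → β) = (Iic j).image f := by
  ext b
  simp [Fin.exists_fin_succ', (castSucc_lt_last j).not_ge]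

theorem image_univ_snoc (f : Fin k → β) (a : β) :
    univ.image (snoc f a : Fin (k + 1) → β) = insert a (univ.image f) := by
  ext b
  simp [Fin.exists_fin_succ', or_comm, eq_comm]

theorem injective_snoc_and_image_univ_eq_iff (f : Fin k → β) (a : β) (s : Finset β) :
    (Function.Injective (snoc f a : Fin (k + 1) → β) ∧ univ.image (snoc f a) = s) ↔
      a ∈ s ∧ Function.Injective f ∧ univ.image f = s.erase a := by
  rw [snoc_injective_iff, image_univ_snoc]
  constructor
  · rintro ⟨⟨hf, ha⟩, rfl⟩
    have ha' : a ∉ univ.image f := by simpa using ha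
    exact ⟨mem_insert_self a _, hf, (erase_insert ha').symm⟩
  · rintro ⟨ha, hf, hs⟩
    have ha' : a ∉ univ.image f := by simp [hs]
    exact ⟨⟨hf, by simpa using ha'⟩, by rw [hs, insert_erase ha]⟩

end Fin

namespace SignedChain

section Exterior

variable {α R : Type*} [LinearOrder α] [CommRing R]

/-- The sign in `e_{s \ {a}} ∧ e_a = insertSign a s • e_s` for `a ∈ s`. -/
def insertSign (a : α) (s : Finset α) : R := ∏ b ∈ s, if a < b then -1 else 1

/-- Right multiplication by `e_a`, in the coordinates `g s` of the basis `e_s`. -/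
def wedgeAt (a : α) (g : Finset α → R) (s : Finset α) : R :=
  if a ∈ s then insertSign a s * g (s.erase a) else 0

/-- The adjoint of `wedgeAt a`. -/
def contractAt (a : α) (g : Finset α → R) (s : Finset α) : R :=
  if a ∈ s then 0 else insertSign a s * g (insert a s)

theorem insertSign_sq (a : α) (s : Finset α) : (insertSign a s : R) ^ 2 = 1 := by
  rw [insertSign, ← prod_pow]
  exact prod_eq_one fun b _ => by split_ifs <;> norm_num

theorem insertSign_insert {a b : α} {s : Finset α} (hb : b ∉ s) :
    (insertSign a (insert b s) : R) = (if a < b then -1 else 1) * insertSign a s :=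
  prod_insert hb

theorem insertSign_mul_insertSign_insert {a b : α} (hab : a ≠ b) {s : Finset α} (ha : a ∉ s)
    (hb : b ∉ s) :
    (insertSign a (insert b s) * insertSign b (insert a s) : R) =
      -(insertSign a s * insertSign b s) := by
  rw [insertSign_insert hb, insertSign_insert ha]
  rcases hab.lt_or_gt with h | h <;> simp [h, h.not_gt]

theorem wedgeAt_insert {a : α} {s : Finset α} (ha : a ∉ s) (g : Finset α → R) :
    wedgeAt a g (insert a s) = insertSign a s * g s := by
  simp [wedgeAt, erase_insert ha, insertSign_insert ha]

theorem wedgeAt_sq_add_contractAt_sq (a : α) (g : Finset α → R) (s : Finset α) :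
    wedgeAt a g s ^ 2 + contractAt a g s ^ 2 = g (s ∆ {a}) ^ 2 := by
  by_cases ha : a ∈ s
  · have hs : s ∆ {a} = s.erase a := by ext; simp [mem_symmDiff]; aesop
    simp [wedgeAt, contractAt, ha, mul_pow, insertSign_sq, hs]
  · have hs : s ∆ {a} = insert a s := by ext; simp [mem_symmDiff]; aesop
    simp [wedgeAt, contractAt, ha, mul_pow, insertSign_sq, hs]

theorem wedgeAt_mul_wedgeAt_insert_insert {a b : α} (hab : a ≠ b) (g : Finset α → R)
    {s : Finset α} (ha : a ∉ s) (hb : b ∉ s) :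
    wedgeAt a g (insert a (insert b s)) * wedgeAt b g (insert a (insert b s)) =
      -(contractAt a g s * contractAt b g s) := by
  rw [wedgeAt_insert (by simp [ha, hab]), insert_comm, wedgeAt_insert (by simp [hb, hab.symm])]
  simp only [contractAt, ha, hb, if_false]
  linear_combination
    (g (insert b s) * g (insert a s)) * insertSign_mul_insertSign_insert (R := R) hab ha hb

theorem wedgeAt_mul_wedgeAt_add_contractAt_mul_contractAt_symmDiff {a b : α} (hab : a ≠ b)
    (g : Finset α → R) (s : Finset α) :
    wedgeAt a g s * wedgeAt b g s + contractAt a g (s ∆ {a, b}) * contractAt b g (s ∆ {a, b}) =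
      0 := by
  by_cases ha : a ∈ s
  · by_cases hb : b ∈ s
    · set t := s ∆ {a, b}
      have hat : a ∉ t := by simp [t, mem_symmDiff, ha]
      have hbt : b ∉ t := by simp [t, mem_symmDiff, hb]
      have hs : s = insert a (insert b t) := by
        ext c; by_cases hca : c = a <;> by_cases hcb : c = b <;> simp [t, mem_symmDiff, *]
      rw [hs, wedgeAt_mul_wedgeAt_insert_insert hab g hat hbt, neg_add_cancel]
    · have hbt : b ∈ s ∆ {a, b} := by simp [mem_symmDiff, hb]
      simp [wedgeAt, hb, contractAt, hbt]
  · have hat : a ∈ s ∆ {a, b} := by simp [mem_symmDiff, ha]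
    simp [wedgeAt, ha, contractAt, hat]

def chainWeight (c : ℕ → Finset α → R) {k : ℕ} (f : Fin k → α) : R :=
  ∏ j : Fin k, c j ((Iic j).image f) * insertSign (f j) ((Iic j).image f)

theorem chainWeight_snoc (c : ℕ → Finset α → R) {k : ℕ} (f : Fin k → α) (a : α) :
    chainWeight c (Fin.snoc f a : Fin (k + 1) → α) =
      chainWeight c f *
        (c k (insert a (univ.image f)) * insertSign a (insert a (univ.image f))) := by
  have hlast : Iic (Fin.last k) = univ := by ext; simp [Fin.le_last]
  rw [chainWeight, Fin.prod_univ_castSucc]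
  simp only [Fin.image_Iic_castSucc_snoc, Fin.snoc_castSucc, Fin.val_castSucc, Fin.snoc_last,
    Fin.val_last, hlast, Fin.image_univ_snoc]
  rfl

variable [Fintype α]

/-- Right multiplication by `∑ a, e_a`. -/
def wedge (g : Finset α → R) (s : Finset α) : R := ∑ a, wedgeAt a g s

def contract (g : Finset α → R) (s : Finset α) : R := ∑ a, contractAt a g s

/-- The canonical anticommutation relations, paired with `g`. -/
theorem sum_wedgeAt_mul_add_sum_contractAt_mul (a b : α) (g : Finset α → R) :
    ∑ s, wedgeAt a g s * wedgeAt b g s + ∑ s, contractAt a g s * contractAt b g s =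
      if a = b then ∑ s, g s ^ 2 else 0 := by
  split_ifs with hab
  · subst hab
    simp_rw [← sq, ← sum_add_distrib, wedgeAt_sq_add_contractAt_sq]
    exact sum_comp_symmDiff {a} (g · ^ 2)
  · rw [← sum_comp_symmDiff {a, b} (fun s => contractAt a g s * contractAt b g s),
      ← sum_add_distrib]
    exact sum_eq_zero fun s _ =>
      wedgeAt_mul_wedgeAt_add_contractAt_mul_contractAt_symmDiff hab g s

theorem sum_sq_wedge_add_sum_sq_contract (g : Finset α → R) :
    ∑ s, wedge g s ^ 2 + ∑ s, contract g s ^ 2 = Fintype.card α * ∑ s, g s ^ 2 :=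
  calc ∑ s, wedge g s ^ 2 + ∑ s, contract g s ^ 2
      = ∑ a, ∑ b, (∑ s, wedgeAt a g s * wedgeAt b g s +
          ∑ s, contractAt a g s * contractAt b g s) := by
        simp only [wedge, contract, sq, sum_mul_sum, sum_add_distrib]
        rw [sum_comm, sum_comm (s := univ (α := Finset α))]
        simp_rw [sum_comm (s := univ (α := Finset α)) (t := univ (α := α))]
    _ = Fintype.card α * ∑ s, g s ^ 2 := by
      simp [sum_wedgeAt_mul_add_sum_contractAt_mul]

theorem sum_sq_wedge_le [LinearOrder R] [IsStrictOrderedRing R] (g : Finset α → R) :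
    ∑ s, wedge g s ^ 2 ≤ Fintype.card α * ∑ s, g s ^ 2 := by
  rw [← sum_sq_wedge_add_sum_sq_contract]
  exact le_add_of_nonneg_right (sum_nonneg fun s _ => sq_nonneg _)

def chainVector (c : ℕ → Finset α → R) : ℕ → Finset α → R
  | 0, s => if s = ∅ then 1 else 0
  | k + 1, s => c k s * wedge (chainVector c k) s

theorem sum_sq_chainVector_le [LinearOrder R] [IsStrictOrderedRing R] {c : ℕ → Finset α → R}
    (hc : ∀ k s, c k s ^ 2 ≤ 1) (k : ℕ) :
    ∑ s, chainVector c k s ^ 2 ≤ (Fintype.card α : R) ^ k := by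
  induction k with
  | zero => simp [chainVector]
  | succ k ih =>
    calc ∑ s, chainVector c (k + 1) s ^ 2
        ≤ ∑ s, wedge (chainVector c k) s ^ 2 := by
          refine sum_le_sum fun s _ => ?_
          rw [chainVector, mul_pow]
          exact mul_le_of_le_one_left (sq_nonneg _) (hc k s)
      _ ≤ Fintype.card α * ∑ s, chainVector c k s ^ 2 := sum_sq_wedge_le _
      _ ≤ Fintype.card α * (Fintype.card α : R) ^ k := by gcongr
      _ = (Fintype.card α : R) ^ (k + 1) := (pow_succ' _ _).symm

theorem chainVector_le_sqrt_card_pow {c : ℕ → Finset α → ℝ} (hc : ∀ k s, c k s ^ 2 ≤ 1)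
    (k : ℕ) (s : Finset α) : chainVector c k s ≤ √(Fintype.card α) ^ k := by
  refine le_of_sq_le_sq ?_ (by positivity)
  rw [← pow_mul, mul_comm, pow_mul, Real.sq_sqrt (Nat.cast_nonneg _)]
  exact (single_le_sum (fun t _ => sq_nonneg (chainVector c k t)) (mem_univ s)).trans
    (sum_sq_chainVector_le hc k)

theorem chainVector_eq_sum (c : ℕ → Finset α → R) (k : ℕ) (s : Finset α) :
    chainVector c k s =
      ∑ f : Fin k → α with Function.Injective f ∧ univ.image f = s, chainWeight c f := by
  induction k generalizing s with
  | zero =>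
    rw [sum_filter, Fintype.sum_unique]
    simp [chainVector, chainWeight, eq_comm, Function.injective_of_subsingleton]
  | succ k ih =>
    have hterm (a : α) (f : Fin k → α) :
        (if Function.Injective (Fin.snoc f a : Fin (k + 1) → α) ∧ univ.image (Fin.snoc f a) = s
          then chainWeight c (Fin.snoc f a : Fin (k + 1) → α) else 0) =
        if a ∈ s then c k s * insertSign a s *
          (if Function.Injective f ∧ univ.image f = s.erase a then chainWeight c f else 0)
        else 0 := by
      rw [if_congr (Fin.injective_snoc_and_image_univ_eq_iff f a s) rfl rfl]
      by_cases ha : a ∈ s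
      · by_cases hf : Function.Injective f ∧ univ.image f = s.erase a
        · rw [if_pos ⟨ha, hf⟩, if_pos ha, if_pos hf, chainWeight_snoc, hf.2, insert_erase ha]
          ring
        · simp [ha, hf]
      · simp [ha]
    have hsnoc (p : α × (Fin k → α)) : Fin.snocEquiv (fun _ => α) p = Fin.snoc p.2 p.1 := rfl
    rw [sum_filter, ← (Fin.snocEquiv fun _ => α).sum_comp, Fintype.sum_prod_type]
    simp only [hsnoc, hterm]
    rw [chainVector, wedge, mul_sum]
    refine sum_congr rfl fun a _ => ?_
    by_cases ha : a ∈ s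
    · simp only [wedgeAt, ha, if_true, ih, sum_filter, mul_sum, mul_assoc]
    · simp [wedgeAt, ha]

end Exterior

section Permutation

variable {n : ℕ} {R : Type*} [CommRing R]

theorem prod_insertSign_image_Iic_eq_sign (σ : Equiv.Perm (Fin n)) :
    ∏ j, (insertSign (σ j) ((Iic j).image σ) : R) = (Equiv.Perm.sign σ : ℤ) := by
  rw [Equiv.Perm.sign_eq_prod_prod_Iio]
  push_cast
  refine prod_congr rfl fun j _ => ?_
  rw [insertSign, prod_image σ.injective.injOn, ← Iio_insert, prod_insert notMem_Iio_self]
  simp only [lt_irrefl, if_false, one_mul]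
  refine prod_congr rfl fun i hi => ?_
  have hij : σ i ≠ σ j := σ.injective.ne (mem_Iio.mp hi).ne
  rcases hij.lt_or_gt with h | h <;> simp [h, h.not_gt]

theorem sum_perm_chainWeight (c : ℕ → Finset (Fin n) → R) :
    ∑ σ : Equiv.Perm (Fin n), chainWeight c σ = chainVector c n univ := by
  rw [chainVector_eq_sum]
  refine sum_bij (fun σ _ => ⇑σ) (fun σ _ => ?_)
    (fun _ _ _ _ => DFunLike.coe_injective.eq_iff.mp) (fun f hf => ?_) fun _ _ => rfl
  · simp [σ.injective, image_univ_equiv]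
  · have hf : f.Injective := (mem_filter.mp hf).2.1
    exact ⟨Equiv.ofBijective f (Finite.injective_iff_bijective.mp hf), mem_univ _, rfl⟩

noncomputable def prefixGate (x y : Fin n → ℝ) (k : ℕ) (s : Finset (Fin n)) : ℝ :=
  if h : k < n then if y ⟨k, h⟩ ≤ ∑ i ∈ s, x i then 1 else 0 else 1

theorem prefixGate_sq_le_one (x y : Fin n → ℝ) (k : ℕ) (s : Finset (Fin n)) :
    prefixGate x y k s ^ 2 ≤ 1 := by
  unfold prefixGate
  split_ifs <;> norm_num

theorem chainWeight_prefixGate (x y : Fin n → ℝ) (σ : Equiv.Perm (Fin n)) :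
    chainWeight (prefixGate x y) σ =
      if ∀ k, y k ≤ ∑ i ∈ Iic k, x (σ i) then ((Equiv.Perm.sign σ : ℤ) : ℝ)
      else 0 := by
  have hgate (j : Fin n) : prefixGate x y j ((Iic j).image σ) =
      if y j ≤ ∑ i ∈ Iic j, x (σ i) then 1 else 0 := by
    rw [prefixGate, dif_pos j.isLt, sum_image σ.injective.injOn]
  rw [chainWeight, prod_mul_distrib, prod_insertSign_image_Iic_eq_sign]
  simp only [hgate, Fintype.prod_boole, ite_mul, one_mul, zero_mul]

end Permutation

end SignedChain

open SignedChain

/-- Let `(x_1,…,x_n)` and `(y_1,…,y_n)` be tuples of reals. Give every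
permutation `σ` of `{1,…,n}` the weight `ε σ = 0` if some prefix sum
`x_{σ(1)} + ⋯ + x_{σ(k)}` is `< y_k`, and `ε σ = sign σ` otherwise. Then
`∑_σ ε σ ≤ √n ^ n`. -/
theorem sum_of_weights_le_sqrt_pow (n : ℕ) (x y : Fin n → ℝ)
    (ε : Equiv.Perm (Fin n) → ℝ)
    (hε : ∀ σ : Equiv.Perm (Fin n),
      ε σ = if ∃ k : Fin n, (∑ i ∈ Finset.Iic k, x (σ i)) < y k then 0
            else ((Equiv.Perm.sign σ : ℤ) : ℝ)) :
    (∑ σ : Equiv.Perm (Fin n), ε σ) ≤ Real.sqrt n ^ n := by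
  have hweight (σ : Equiv.Perm (Fin n)) : ε σ = chainWeight (prefixGate x y) σ := by
    simp only [hε, chainWeight_prefixGate, ← not_lt, ← not_exists, ite_not]
  simp only [hweight, sum_perm_chainWeight]
  simpa using chainVector_le_sqrt_card_pow (prefixGate_sq_le_one x y) n univ
end

section
/- Fix a natural number $n \geq 1$, set $N = \{1,\ldots,n\}$, and let $f : \mathcal{P}(N) \to [-1,1]$ be any function. Define $g : \mathcal{P}(N) \to \mathbb{R}$ by $g(T) = \sum_{\sigma \in S_k} \mathrm{sign}(\sigma) \prod_{i=1}^{k} f(\{t_{\sigma(1)},\ldots,t_{\sigma(i)}\})$ for $T = \{t_1 < \cdots < t_k\}$ (so $g(\emptyset) = 1$). Let $V = \bigoplus_{k=0}^{n} \bigwedge^k \mathbb{R}^n$ with the inner product making $\{\delta_S : S \subseteq N\}$ orthonormal, where $\delta_S = e_{s_1} \wedge \cdots \wedge e_{s_k}$ for $S = \{s_1 < \cdots < s_k\}$. For $0 \le k \le n$, identify $g$ restricted to $k$-element subsets with the element $g|_{G_k} = \sum_{|S| = k} g(S)\,\delta_S \in \bigwedge^k \mathbb{R}^n$. Let $P \in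 \mathrm{End}(V)$ satisfy $P(\delta_S) = f(S)\,\delta_S$, let $\alpha = \frac{1}{\sqrt{n}}(\delta_{\{1\}} + \cdots + \delta_{\{n\}})$, and let $R \in \mathrm{End}(V)$ be $\varphi \mapsto \varphi \wedge \alpha$. Then for every $1 \le k \le n$, $g|_{G_k} = \sqrt{n}\, P(R(g|_{G_{k-1}}))$. -/
/-- `δ S = e_{s_1} ∧ ⋯ ∧ e_{s_k}` for `S = {s_1 < ⋯ < s_k} ⊆ {1,…,n}`, viewed inside the
exterior algebra `V = ⨁_k ⋀^k ℝⁿ` of `ℝⁿ` (with `e_1,…,e_n` the canonical basis). -/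
noncomputable def deltaWedge (n : ℕ) (S : Finset (Fin n)) :
    ExteriorAlgebra ℝ (EuclideanSpace ℝ (Fin n)) :=
  ((S.sort (· ≤ ·)).map fun i =>
    ExteriorAlgebra.ι ℝ (EuclideanSpace.single i (1 : ℝ))).prod

/-!
Both sides are governed by one permutation of `Fin (m + 1)`: the cycle `(p p+1 … m)`, of sign
`(-1)^(m - p)`, which moves the last slot to position `p`.

Writing each `σ ∈ S_{m+1}` as this cycle after a permutation of the first `m` slots, the last
prefix set of the chain is all of `S` and the others form a chain of `S \ {s_p}`; hence
`g S = f S * ∑_{j ∈ S} (-1)^#{t ∈ S | j < t} g (S \ {j})`.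
The same cycle carries `e_j` from the end of `δ_{S \ {j}} ∧ e_j` to its sorted place, so
`δ_{S \ {j}} ∧ e_j = (-1)^#{t ∈ S | j < t} δ_S`, whereas `δ_T ∧ e_i = 0` for `i ∈ T`.
Since `√n R φ = φ ∧ (e_1 + ⋯ + e_n)`, the identity follows by regrouping the pairs `(S, j ∈ S)`
with `#S = k` as the pairs `(T, i ∉ T)` with `#T = k - 1`.
-/

open Equiv Finset ExteriorAlgebra EuclideanSpace

namespace Fin

variable {m : ℕ}

def permOfLast (p : Fin (m + 1)) (τ : Perm (Fin m)) : Perm (Fin (m + 1)) :=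
  cycleIcc p (last m) * τ.extendDomain castSuccEmb.toEquivRange

theorem permOfLast_castSucc (p : Fin (m + 1)) (τ : Perm (Fin m)) (x : Fin m) :
    permOfLast p τ x.castSucc = p.succAbove (τ x) := by
  have hext : τ.extendDomain castSuccEmb.toEquivRange x.castSucc = (τ x).castSucc :=
    Perm.extendDomain_apply_image τ castSuccEmb.toEquivRange x
  rw [permOfLast, Perm.mul_apply, hext, ← succAbove_last_apply,
    ← Function.comp_apply (f := cycleIcc p (last m)), cycleIcc_comp_succAbove p _ (le_last p)]

theorem permOfLast_last (p : Fin (m + 1)) (τ : Perm (Fin m)) : permOfLast p τ (last m) = p := by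
  have hext : τ.extendDomain castSuccEmb.toEquivRange (last m) = last m :=
    Perm.extendDomain_apply_not_subtype _ _ (by simp)
  rw [permOfLast, Perm.mul_apply, hext, cycleIcc_of_last (le_last p)]

theorem comp_permOfLast {α : Type*} (w : Fin (m + 1) → α) (p : Fin (m + 1)) (τ : Perm (Fin m)) :
    w ∘ permOfLast p τ = snoc (w ∘ p.succAbove ∘ τ) (w p) := by
  funext x
  induction x using lastCases with
  | last => simp [permOfLast_last]
  | cast x => simp [permOfLast_castSucc]

theorem sign_permOfLast (p : Fin (m + 1)) (τ : Perm (Fin m)) :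
    Perm.sign (permOfLast p τ) = (-1) ^ (m - p : ℕ) * Perm.sign τ := by
  rw [permOfLast, map_mul, sign_cycleIcc_of_le (le_last p), Perm.sign_extendDomain, val_last]

theorem bijective_permOfLast :
    Function.Bijective fun q : Fin (m + 1) × Perm (Fin m) => permOfLast q.1 q.2 := by
  rw [Fintype.bijective_iff_injective_and_card]
  refine ⟨fun ⟨p, τ⟩ ⟨p', τ'⟩ h => ?_, by simp [Fintype.card_perm, Nat.factorial_succ]⟩
  have hp : p = p' := by simpa [permOfLast_last] using congr($h (last m))
  subst hp
  simp only [permOfLast, mul_right_inj, Prod.mk.injEq, true_and] at h ⊢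
  exact Perm.extendDomainHom_injective _ h

theorem sum_perm_eq_sum_permOfLast {M : Type*} [AddCommMonoid M] (F : Perm (Fin (m + 1)) → M) :
    ∑ σ, F σ = ∑ p, ∑ τ, F (permOfLast p τ) := by
  rw [← Fintype.sum_prod_type']
  exact (Fintype.sum_bijective _ bijective_permOfLast _ _ fun _ => rfl).symm

end Fin

section FlagSum

variable {α : Type*} [DecidableEq α] (f : Finset α → ℝ)

def flagProd {k : ℕ} (w : Fin k → α) : ℝ :=
  ∏ i, f ((Iic i).image w)

def altFlagSum {k : ℕ} (w : Fin k → α) : ℝ :=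
  ∑ σ : Perm (Fin k), ((Perm.sign σ : ℤ) : ℝ) * flagProd f (w ∘ σ)

variable {m : ℕ}

theorem flagProd_snoc (w : Fin m → α) (a : α) :
    flagProd f (Fin.snoc w a) = flagProd f w * f (insert a (univ.image w)) := by
  rw [flagProd, Fin.prod_univ_castSucc, ← Fin.top_eq_last, Iic_top, flagProd]
  congr 1
  · refine prod_congr rfl fun i _ => congrArg f ?_
    ext x
    simp [Fin.exists_fin_succ', Fin.castSucc_lt_last, not_le_of_gt]
  · congr 1
    ext x
    simp [Fin.exists_fin_succ', or_comm, eq_comm]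

theorem insert_image_succAbove_comp_perm (w : Fin (m + 1) → α) (p : Fin (m + 1))
    (τ : Perm (Fin m)) :
    insert (w p) (univ.image (w ∘ p.succAbove ∘ τ)) = univ.image w := by
  rw [← image_image, ← image_image, image_univ_equiv, Fin.image_succAbove_univ, ← image_insert,
    insert_compl_self]

theorem altFlagSum_succ (w : Fin (m + 1) → α) :
    altFlagSum f w = f (univ.image w) *
      ∑ p : Fin (m + 1), (-1) ^ (m - p : ℕ) * altFlagSum f (w ∘ p.succAbove) := by
  simp only [altFlagSum, Fin.sum_perm_eq_sum_permOfLast, mul_sum]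
  refine sum_congr rfl fun p _ => sum_congr rfl fun τ _ => ?_
  rw [Fin.comp_permOfLast, flagProd_snoc, insert_image_succAbove_comp_perm, Fin.sign_permOfLast]
  push_cast
  rw [Function.comp_assoc]
  ring

end FlagSum

section Sorted

variable {α : Type*} [LinearOrder α] {m : ℕ}

theorem orderEmbOfFin_comp_succAbove (S : Finset α) (h : #S = m + 1) (p : Fin (m + 1))
    (h' : #(S.erase (S.orderEmbOfFin h p)) = m) :
    S.orderEmbOfFin h ∘ p.succAbove = (S.erase (S.orderEmbOfFin h p)).orderEmbOfFin h' := by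
  have hmem (x : Fin m) : S.orderEmbOfFin h (p.succAbove x) ∈ S.erase (S.orderEmbOfFin h p) :=
    mem_erase.2 ⟨fun hx => Fin.succAbove_ne p x ((S.orderEmbOfFin h).injective hx),
      orderEmbOfFin_mem S h _⟩
  exact orderEmbOfFin_unique h' hmem
    ((S.orderEmbOfFin h).strictMono.comp (Fin.strictMono_succAbove p))

theorem card_filter_orderEmbOfFin_lt (S : Finset α) (h : #S = m + 1) (p : Fin (m + 1)) :
    #{t ∈ S | S.orderEmbOfFin h p < t} = m - p := by
  calc #{t ∈ S | S.orderEmbOfFin h p < t}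
      = #{t ∈ univ.map (S.orderEmbOfFin h).toEmbedding | S.orderEmbOfFin h p < t} := by
        rw [map_orderEmbOfFin_univ]
    _ = #(Ioi p) := by
        rw [filter_map, card_map]
        congr 1
        ext x
        simp
    _ = m - p := by rw [Fin.card_Ioi, Nat.add_sub_cancel]

theorem sum_eq_sum_orderEmbOfFin {M : Type*} [AddCommMonoid M] (S : Finset α) {k : ℕ}
    (h : #S = k) (F : α → M) : ∑ j ∈ S, F j = ∑ p, F (S.orderEmbOfFin h p) := by
  conv_lhs => rw [← map_orderEmbOfFin_univ S h]
  rw [sum_map]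
  rfl

end Sorted

section SortedAltFlagSum

variable {α : Type*} [LinearOrder α] (f : Finset α → ℝ)

def sortedAltFlagSum (S : Finset α) : ℝ :=
  altFlagSum f (S.orderEmbOfFin rfl)

theorem sortedAltFlagSum_eq_altFlagSum (S : Finset α) {k : ℕ} (h : #S = k) :
    sortedAltFlagSum f S = altFlagSum f (S.orderEmbOfFin h) := by
  subst h
  rfl

theorem sortedAltFlagSum_of_card_eq_succ {m : ℕ} (S : Finset α) (h : #S = m + 1) :
    sortedAltFlagSum f S =
      f S * ∑ j ∈ S, (-1) ^ #{t ∈ S | j < t} * sortedAltFlagSum f (S.erase j) := by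
  have h' (p : Fin (m + 1)) : #(S.erase (S.orderEmbOfFin h p)) = m := by
    rw [card_erase_of_mem (orderEmbOfFin_mem S h p), h, Nat.add_sub_cancel]
  rw [sortedAltFlagSum_eq_altFlagSum f S h, altFlagSum_succ, image_orderEmbOfFin_univ,
    sum_eq_sum_orderEmbOfFin S h]
  congr 1
  refine sum_congr rfl fun p _ => ?_
  rw [card_filter_orderEmbOfFin_lt, orderEmbOfFin_comp_succAbove S h p (h' p),
    sortedAltFlagSum_eq_altFlagSum f _ (h' p)]

end SortedAltFlagSum

namespace ExteriorAlgebra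

variable {R M : Type*} [CommRing R] [AddCommGroup M] [Module R M] {m : ℕ}

theorem ιMulti_snoc (v : Fin m → M) (x : M) :
    ιMulti R (m + 1) (Fin.snoc v x) = ιMulti R m v * ι R x := by
  rw [ιMulti_apply, ιMulti_apply, List.ofFn_succ', List.prod_concat]
  simp only [Fin.snoc_castSucc, Fin.snoc_last]

theorem ιMulti_comp_succAbove_mul_ι (w : Fin (m + 1) → M) (p : Fin (m + 1)) :
    ιMulti R m (w ∘ p.succAbove) * ι R (w p) = (-1 : R) ^ (m - p : ℕ) • ιMulti R (m + 1) w := by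
  have hw : w ∘ p.succAbove = w ∘ p.succAbove ∘ (1 : Perm (Fin m)) := rfl
  rw [hw, ← ιMulti_snoc, ← Fin.comp_permOfLast, AlternatingMap.map_perm, Fin.sign_permOfLast,
    Perm.sign_one, mul_one, Units.smul_def, ← Int.cast_smul_eq_zsmul R]
  push_cast
  rfl

end ExteriorAlgebra

section DeltaWedge

variable {n : ℕ}

theorem deltaWedge_eq_ιMulti (S : Finset (Fin n)) {k : ℕ} (h : #S = k) :
    deltaWedge n S = ιMulti ℝ k fun i => single (S.orderEmbOfFin h i) (1 : ℝ) := by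
  rw [deltaWedge, ιMulti_apply, ← listMap_orderEmbOfFin_finRange S h, List.map_map,
    List.ofFn_eq_map]
  rfl

theorem deltaWedge_erase_mul_ι {m : ℕ} (S : Finset (Fin n)) (h : #S = m + 1) (p : Fin (m + 1)) :
    deltaWedge n (S.erase (S.orderEmbOfFin h p)) * ι ℝ (single (S.orderEmbOfFin h p) (1 : ℝ)) =
      (-1 : ℝ) ^ (m - p : ℕ) • deltaWedge n S := by
  have h' : #(S.erase (S.orderEmbOfFin h p)) = m := by
    rw [card_erase_of_mem (orderEmbOfFin_mem S h p), h, Nat.add_sub_cancel]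
  rw [deltaWedge_eq_ιMulti _ h', ← orderEmbOfFin_comp_succAbove S h p h', deltaWedge_eq_ιMulti S h]
  exact ιMulti_comp_succAbove_mul_ι (fun i => single (S.orderEmbOfFin h i) (1 : ℝ)) p

theorem exists_orderEmbOfFin_eq {S : Finset (Fin n)} {k : ℕ} (h : #S = k) {i : Fin n}
    (hi : i ∈ S) : ∃ p, S.orderEmbOfFin h p = i := by
  rwa [← Set.mem_range, range_orderEmbOfFin]

theorem deltaWedge_mul_ι_of_notMem (T : Finset (Fin n)) {i : Fin n} (hi : i ∉ T) :
    deltaWedge n T * ι ℝ (single i (1 : ℝ)) =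
      (-1 : ℝ) ^ #{t ∈ T | i < t} • deltaWedge n (insert i T) := by
  have h : #(insert i T) = #T + 1 := card_insert_of_notMem hi
  obtain ⟨p, hp⟩ := exists_orderEmbOfFin_eq h (mem_insert_self i T)
  have hwedge := deltaWedge_erase_mul_ι (insert i T) h p
  have hcount := card_filter_orderEmbOfFin_lt (insert i T) h p
  rw [hp, erase_insert hi] at hwedge
  rw [hp, filter_insert, if_neg (lt_irrefl i)] at hcount
  rw [hwedge, hcount]

theorem deltaWedge_mul_ι_of_mem (T : Finset (Fin n)) {i : Fin n} (hi : i ∈ T) :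
    deltaWedge n T * ι ℝ (single i (1 : ℝ)) = 0 := by
  obtain ⟨p, rfl⟩ := exists_orderEmbOfFin_eq rfl hi
  rw [deltaWedge_eq_ιMulti T rfl, ← ιMulti_snoc]
  refine ιMulti_eq_zero_of_not_inj fun hinj => (Fin.castSucc_lt_last p).ne (@hinj p.castSucc _ ?_)
  simp

end DeltaWedge

theorem sum_card_succ_sum_mem_eq_sum_card_sum_compl {ι M : Type*} [Fintype ι] [DecidableEq ι] [AddCommMonoid M]
    (m : ℕ) (F : Finset ι → ι → M) :
    ∑ S ∈ univ.filter (fun S : Finset ι => #S = m + 1), ∑ j ∈ S, F S j =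
      ∑ T ∈ univ.filter (fun T : Finset ι => #T = m), ∑ i ∈ Tᶜ, F (insert i T) i := by
  rw [sum_sigma', sum_sigma']
  refine sum_nbij' (fun x => ⟨x.1.erase x.2, x.2⟩) (fun x => ⟨insert x.2 x.1, x.2⟩)
    ?_ ?_ ?_ ?_ ?_
  all_goals rintro ⟨S, j⟩
  all_goals simp +contextual [card_erase_of_mem, card_insert_of_notMem]

theorem g_restrict_eq_sqrt_smul_P_R_general (n : ℕ)
    (f : Finset (Fin n) → ℝ)
    (g : Finset (Fin n) → ℝ)
    (hg : ∀ T : Finset (Fin n),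
      g T = ∑ σ : Equiv.Perm (Fin T.card),
        ((Equiv.Perm.sign σ : ℤ) : ℝ) *
          ∏ i : Fin T.card,
            f ((Finset.Iic i).image fun j => T.orderEmbOfFin rfl (σ j)))
    (P R : ExteriorAlgebra ℝ (EuclideanSpace ℝ (Fin n)) →ₗ[ℝ]
           ExteriorAlgebra ℝ (EuclideanSpace ℝ (Fin n)))
    (hP : ∀ S : Finset (Fin n), P (deltaWedge n S) = f S • deltaWedge n S)
    (hR : ∀ φ : ExteriorAlgebra ℝ (EuclideanSpace ℝ (Fin n)),
      R φ = φ * ExteriorAlgebra.ι ℝ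
        ((Real.sqrt n)⁻¹ • ∑ i : Fin n, EuclideanSpace.single i (1 : ℝ))) :
    ∀ k : ℕ, 1 ≤ k → k ≤ n →
      (∑ S ∈ Finset.univ.filter fun S : Finset (Fin n) => S.card = k,
          g S • deltaWedge n S)
        = Real.sqrt n •
          P (R (∑ S ∈ Finset.univ.filter fun S : Finset (Fin n) => S.card = k - 1,
            g S • deltaWedge n S)) := by
  intro k hk hkn
  obtain ⟨m, rfl⟩ := Nat.exists_eq_add_of_le' hk
  obtain rfl : g = sortedAltFlagSum f := funext hg
  have hsqrt : √(n : ℝ) ≠ 0 := Real.sqrt_ne_zero'.2 (by exact_mod_cast hk.trans hkn)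
  have hR' (φ : ExteriorAlgebra ℝ (EuclideanSpace ℝ (Fin n))) :
      √(n : ℝ) • R φ = ∑ i, φ * ι ℝ (single i (1 : ℝ)) := by
    rw [hR, map_smul, mul_smul_comm, smul_smul, mul_inv_cancel₀ hsqrt, one_smul, map_sum, mul_sum]
  rw [Nat.add_sub_cancel, ← map_smul, hR']
  calc _ = ∑ S ∈ univ.filter (fun S : Finset (Fin n) => #S = m + 1), ∑ j ∈ S,
          (f S * (-1) ^ #{t ∈ S | j < t} * sortedAltFlagSum f (S.erase j)) • deltaWedge n S :=
        sum_congr rfl fun S hS => by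
          rw [sortedAltFlagSum_of_card_eq_succ f S (mem_filter.1 hS).2, mul_sum, sum_smul]
          simp only [mul_assoc]
    _ = ∑ T ∈ univ.filter (fun T : Finset (Fin n) => #T = m), ∑ i ∈ Tᶜ,
          (f (insert i T) * (-1) ^ #{t ∈ T | i < t} * sortedAltFlagSum f T) •
            deltaWedge n (insert i T) := by
        rw [sum_card_succ_sum_mem_eq_sum_card_sum_compl]
        refine sum_congr rfl fun T _ => sum_congr rfl fun i hi => ?_
        rw [erase_insert (mem_compl.1 hi), filter_insert, if_neg (lt_irrefl i)]
    _ = ∑ T ∈ univ.filter (fun T : Finset (Fin n) => #T = m), ∑ i,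
          sortedAltFlagSum f T • P (deltaWedge n T * ι ℝ (single i (1 : ℝ))) := by
        refine sum_congr rfl fun T _ => ?_
        rw [← sum_subset (subset_univ Tᶜ) fun i _ hi => by
          rw [deltaWedge_mul_ι_of_mem T (by simpa using hi), map_zero, smul_zero]]
        refine sum_congr rfl fun i hi => ?_
        rw [deltaWedge_mul_ι_of_notMem T (mem_compl.1 hi), map_smul, hP, smul_smul, smul_smul]
        congr 1
        ring
    _ = _ := by
        simp only [sum_mul, map_sum, smul_mul_assoc, map_smul]
        exact sum_comm

/-- With `f : 𝒫({1,…,n}) → [-1,1]`, `g` defined from `f` by the signed sum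
over permutations, `P (δ S) = f S • δ S`, `α = (1/√n)(δ{1} + ⋯ + δ{n})`, `R : φ ↦ φ ∧ α`,
and `g|_{G_k} = ∑_{|S| = k} g S • δ S ∈ ⋀^k ℝⁿ ⊆ V`, one has
`g|_{G_k} = √n • P (R (g|_{G_{k-1}}))` for all `1 ≤ k ≤ n`. -/
theorem g_restrict_eq_sqrt_smul_P_R (n : ℕ) (hn : 1 ≤ n)
    (f : Finset (Fin n) → ℝ) (hf : ∀ S : Finset (Fin n), f S ∈ Set.Icc (-1 : ℝ) 1)
    (g : Finset (Fin n) → ℝ)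
    (hg : ∀ T : Finset (Fin n),
      g T = ∑ σ : Equiv.Perm (Fin T.card),
        ((Equiv.Perm.sign σ : ℤ) : ℝ) *
          ∏ i : Fin T.card,
            f ((Finset.Iic i).image fun j => T.orderEmbOfFin rfl (σ j)))
    (P R : ExteriorAlgebra ℝ (EuclideanSpace ℝ (Fin n)) →ₗ[ℝ]
           ExteriorAlgebra ℝ (EuclideanSpace ℝ (Fin n)))
    (hP : ∀ S : Finset (Fin n), P (deltaWedge n S) = f S • deltaWedge n S)
    (hR : ∀ φ : ExteriorAlgebra ℝ (EuclideanSpace ℝ (Fin n)),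
      R φ = φ * ExteriorAlgebra.ι ℝ
        ((Real.sqrt n)⁻¹ • ∑ i : Fin n, EuclideanSpace.single i (1 : ℝ))) :
    ∀ k : ℕ, 1 ≤ k → k ≤ n →
      (∑ S ∈ Finset.univ.filter fun S : Finset (Fin n) => S.card = k,
          g S • deltaWedge n S)
        = Real.sqrt n •
          P (R (∑ S ∈ Finset.univ.filter fun S : Finset (Fin n) => S.card = k - 1,
            g S • deltaWedge n S)) :=
  g_restrict_eq_sqrt_smul_P_R_general n f g hg P R hP hR
end
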